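/- arXiv:1511.08110 — 2 statements merged into one kernel-verified Lean document; each statement's English description precedes it below -/
import Mathlib

section
/- Let m, l, ν, p, h, β, γ, e, c, n, q, a, K be real parameters with β ≠ 0, K ≠ 0 and a(γ + ν) + Kβν ≠ 0. Then the endemic prey-only point E₄ = ( 0, 0, a(Kβγ + Kβν − γ² − 2γν − ν²)/(β(a(γ + ν) + Kβν)), (γ + ν)/β ) is an equilibrium of the eco-epidemic food-web model, i.e. the vector field G vanishes at E₄. -/
noncomputable def ecoField (m l ν p h β γ e c n q a K : ℝ) (W V I S : ℝ) :
    ℝ × ℝ × ℝ × ℝ :=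
  (-m * W + p * V * W,
   -l * V + e * S * V - h * V * W + q * I * V,
   β * I * S - n * I * V - γ * I - ν * I,
   a * S * (1 - (S + I) / K) - c * V * S - β * S * I + γ * I)

theorem ecoField_zero_zero (m l ν p h β γ e c n q a K I S : ℝ) :
    ecoField m l ν p h β γ e c n q a K 0 0 I S =
      (0, 0, I * (β * S - γ - ν), a * S * (1 - (S + I) / K) - I * (β * S - γ)) := by
  simp only [ecoField, Prod.mk.injEq]
  exact ⟨by ring, by ring, by ring, by ring⟩

theorem logistic_sub_mul_eq_zero {a K S I ν : ℝ} (hK : K ≠ 0)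
    (hI : I * (a * S + K * ν) = a * S * (K - S)) :
    a * S * (1 - (S + I) / K) - I * ν = 0 := by
  field_simp
  linear_combination -hI

/-- The endemic prey-only point
`E₄ = (0, 0, a(Kβγ + Kβν − γ² − 2γν − ν²)/(β(a(γ+ν) + Kβν)), (γ+ν)/β)` is an
equilibrium of the eco-epidemic food-web model. -/
theorem eco_equilibrium_E4
    (m l ν p h β γ e c n q a K : ℝ)
    (hβ : β ≠ 0) (hK : K ≠ 0) (hD : a * (γ + ν) + K * β * ν ≠ 0) :
    ecoField m l ν p h β γ e c n q a K
      0
      0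
      (a * (K * β * γ + K * β * ν - γ ^ 2 - 2 * γ * ν - ν ^ 2) /
        (β * (a * (γ + ν) + K * β * ν)))
      ((γ + ν) / β) = (0, 0, 0, 0) := by
  set S := (γ + ν) / β
  set I := a * (K * β * γ + K * β * ν - γ ^ 2 - 2 * γ * ν - ν ^ 2) /
    (β * (a * (γ + ν) + K * β * ν))
  have hS : β * S - γ = ν := by simp only [S]; field_simp; ring
  -- `a * S + K * ν = (a(γ+ν) + Kβν)/β`, which cancels the denominator of `I`.
  have hI : I * (a * S + K * ν) = a * S * (K - S) := by
    simp only [I, S]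
    field_simp
    ring
  rw [ecoField_zero_zero, hS, sub_self, mul_zero, logistic_sub_mul_eq_zero hK hI]
end

section
/- Let r, m, q, p, K_Q, K_P be positive real parameters, and set a = pK_Q/(qK_P), b = r√K_Q/(q√K_P), c = m√K_Q/(q√K_P). Suppose Q, P : ℝ → ℝ are differentiable, strictly positive functions satisfying the herd competition system Q'(τ) = r(1 − Q(τ)/K_Q)Q(τ) − q√(Q(τ))√(P(τ)) and P'(τ) = m(1 − P(τ)/K_P)P(τ) − p√(Q(τ))√(P(τ)). Define X(t) = √(Q(τ)/K_Q) and Y(t) = √(P(τ)/K_P) with the rescaled time t = τ·q√K_P/(2√K_Q). Then X and Y are differentiable and satisfy the adimensionalized singularity-free system dX/dt = b(1 − X²)X − Y and dY/dt = c(1 − Y²)Y − aX. -/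
/-!
Write `k = 2√K_Q/(q√K_P)` for the time scale, so `X t = √(Q (k t)/K_Q)`. Positivity of `Q`
makes the square root differentiable, and the chain rule gives
`X' = k Q'/(2 K_Q X)`. Substituting `Q = K_Q X²`, `√Q = √K_Q X`, `√P = √K_P Y` into the
equation for `Q'` cancels one factor `X`, which removes the square-root singularity; the
coefficients `k r/2` and `k q √K_P/(2√K_Q)` are `b` and `1`. The same computation with the
roles of the two herds exchanged gives the equation for `Y`, with coefficients `c` and `a`.
-/

open Real

theorem hasDerivAt_sqrt_logistic_herd_rescaled {f g X Y : ℝ → ℝ} {ρ e K L k t : ℝ}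
    (hK : 0 < K) (hL : 0 < L) (hf : 0 < f (k * t))
    (hf' : HasDerivAt f (ρ * (1 - f (k * t) / K) * f (k * t)
      - e * √(f (k * t)) * √(g (k * t))) (k * t))
    (hX : ∀ s, X s = √(f (k * s) / K)) (hY : ∀ s, Y s = √(g (k * s) / L)) :
    HasDerivAt X (k * ρ / 2 * (1 - X t ^ 2) * X t - k * e * √L / (2 * √K) * Y t) t := by
  have hkt : HasDerivAt (fun s => k * s) k t := by
    simpa using (hasDerivAt_id t).const_mul k
  have hderiv := ((hf'.comp t hkt).div_const K).sqrt (div_pos hf hK).ne'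
  simp only [Function.comp_def, ← hX] at hderiv
  convert hderiv using 1
  have hXt : 0 < X t := by rw [hX]; positivity
  have hf_eq : f (k * t) = K * X t ^ 2 := by
    rw [hX, sq_sqrt (div_pos hf hK).le]; field_simp
  have hsqrt_f : √(f (k * t)) = √K * X t := by
    rw [hX, ← sqrt_mul hK.le, mul_div_cancel₀ _ hK.ne']
  have hsqrt_g : √(g (k * t)) = √L * Y t := by
    rw [hY, ← sqrt_mul hL.le, mul_div_cancel₀ _ hL.ne']
  have hsK : 0 < √K := sqrt_pos.mpr hK
  rw [hsqrt_f, hsqrt_g, hf_eq]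
  field_simp
  linear_combination k * e * √L * Y t * sq_sqrt hK.le

theorem herd_adimensionalization_general
    (r m q p KQ KP a b c : ℝ)
    (hq : 0 < q)
    (hKQ : 0 < KQ) (hKP : 0 < KP)
    (ha : a = p * KQ / (q * KP))
    (hb : b = r * Real.sqrt KQ / (q * Real.sqrt KP))
    (hc : c = m * Real.sqrt KQ / (q * Real.sqrt KP))
    (Q P : ℝ → ℝ)
    (hQpos : ∀ τ, 0 < Q τ) (hPpos : ∀ τ, 0 < P τ)
    (hQ : ∀ τ, HasDerivAt Q
      (r * (1 - Q τ / KQ) * Q τ - q * Real.sqrt (Q τ) * Real.sqrt (P τ)) τ)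
    (hP : ∀ τ, HasDerivAt P
      (m * (1 - P τ / KP) * P τ - p * Real.sqrt (Q τ) * Real.sqrt (P τ)) τ)
    (X Y : ℝ → ℝ)
    (hX : ∀ t, X t = Real.sqrt (Q (2 * Real.sqrt KQ / (q * Real.sqrt KP) * t) / KQ))
    (hY : ∀ t, Y t = Real.sqrt (P (2 * Real.sqrt KQ / (q * Real.sqrt KP) * t) / KP)) :
    (∀ t, HasDerivAt X (b * (1 - (X t) ^ 2) * X t - Y t) t) ∧
    (∀ t, HasDerivAt Y (c * (1 - (Y t) ^ 2) * Y t - a * X t) t) := by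
  have hsKQ : 0 < √KQ := sqrt_pos.mpr hKQ
  have hsKP : 0 < √KP := sqrt_pos.mpr hKP
  refine ⟨fun t => ?_, fun t => ?_⟩
  · convert hasDerivAt_sqrt_logistic_herd_rescaled hKQ hKP (hQpos _) (hQ _) hX hY using 3
    · rw [hb]; field_simp
    · field_simp
  · have hP' : ∀ τ, HasDerivAt P (m * (1 - P τ / KP) * P τ - p * √(P τ) * √(Q τ)) τ := by
      intro τ; rw [mul_right_comm p]; exact hP τ
    convert hasDerivAt_sqrt_logistic_herd_rescaled hKP hKQ (hPpos _) (hP' _) hY hX using 3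
    · rw [hc]; field_simp
    · rw [ha]; field_simp; rw [sq_sqrt hKQ.le, sq_sqrt hKP.le]; ring

/-- Adimensionalization of the herd competition model: if `Q, P` are positive
differentiable solutions of `Q' = r(1 − Q/K_Q)Q − q√Q√P`,
`P' = m(1 − P/K_P)P − p√Q√P`, then the rescaled variables
`X(t) = √(Q(τ)/K_Q)`, `Y(t) = √(P(τ)/K_P)` with `t = τ·q√K_P/(2√K_Q)` solve the
singularity-free system `X' = b(1 − X²)X − Y`, `Y' = c(1 − Y²)Y − aX`, where
`a = pK_Q/(qK_P)`, `b = r√K_Q/(q√K_P)`, `c = m√K_Q/(q√K_P)`. -/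
theorem herd_adimensionalization
    (r m q p KQ KP a b c : ℝ)
    (hr : 0 < r) (hm : 0 < m) (hq : 0 < q) (hp : 0 < p)
    (hKQ : 0 < KQ) (hKP : 0 < KP)
    (ha : a = p * KQ / (q * KP))
    (hb : b = r * Real.sqrt KQ / (q * Real.sqrt KP))
    (hc : c = m * Real.sqrt KQ / (q * Real.sqrt KP))
    (Q P : ℝ → ℝ)
    (hQpos : ∀ τ, 0 < Q τ) (hPpos : ∀ τ, 0 < P τ)
    (hQ : ∀ τ, HasDerivAt Q
      (r * (1 - Q τ / KQ) * Q τ - q * Real.sqrt (Q τ) * Real.sqrt (P τ)) τ)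
    (hP : ∀ τ, HasDerivAt P
      (m * (1 - P τ / KP) * P τ - p * Real.sqrt (Q τ) * Real.sqrt (P τ)) τ)
    (X Y : ℝ → ℝ)
    (hX : ∀ t, X t = Real.sqrt (Q (2 * Real.sqrt KQ / (q * Real.sqrt KP) * t) / KQ))
    (hY : ∀ t, Y t = Real.sqrt (P (2 * Real.sqrt KQ / (q * Real.sqrt KP) * t) / KP)) :
    (∀ t, HasDerivAt X (b * (1 - (X t) ^ 2) * X t - Y t) t) ∧
    (∀ t, HasDerivAt Y (c * (1 - (Y t) ^ 2) * Y t - a * X t) t) :=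
  herd_adimensionalization_general r m q p KQ KP a b c hq hKQ hKP ha hb hc Q P hQpos hPpos hQ hP X Y
    hX hY
end
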